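/- arXiv:2309.10521 — 2 statements merged into one kernel-verified Lean document; each statement's English description precedes it below -/
import Mathlib

section
/- Let a, b, n be positive integers with a < 3b, and h(j) = a·j^n + b for j ≥ 0, h(j) = 0 for j < 0. Then qdepth(h) = ⌊a/b⌋ + 1. -/
/-- `β_k^d(h) = Σ_{j ≤ k} (-1)^{k-j} C(d-j, k-j) h(j)` (a finite sum when `h`
vanishes for `j ≪ 0`). -/
noncomputable def beta (h : ℤ → ℤ) (d k : ℤ) : ℤ :=
  ∑ᶠ j ∈ Set.Iic k, (-1 : ℤ) ^ (k - j).toNat * ((d - j).toNat.choose (k - j).toNat : ℤ) * h j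

/-- The set of `d` such that `β_k^d(h) ≥ 0` for all `k ≤ d`; its maximum is `qdepth h`. -/
def qdepthSet (h : ℤ → ℤ) : Set ℤ := {d : ℤ | ∀ k ≤ d, 0 ≤ beta h d k}

lemma beta_eq_sum (h : ℤ → ℤ) (hh0 : ∀ j : ℤ, j < 0 → h j = 0) (d k : ℤ) :
    beta h d k = ∑ j ∈ Finset.Icc 0 k,
      (-1 : ℤ) ^ (k - j).toNat * ((d - j).toNat.choose (k - j).toNat : ℤ) * h j := by
  apply finsum_mem_eq_sum_of_inter_support_eq
  ext j
  simp only [Set.mem_inter_iff, Set.mem_Iic, Function.mem_support, Finset.coe_Icc, Set.mem_Icc]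
  constructor
  · rintro ⟨hjk, hne⟩
    refine ⟨⟨?_, hjk⟩, hne⟩
    by_contra hj
    exact hne (by simp [hh0 j (by omega)])
  · rintro ⟨⟨_, hjk⟩, hne⟩; exact ⟨hjk, hne⟩

theorem qdepth_small_alpha (a b : ℤ) (ha : 0 < a) (hb : 0 < b) (hab : a < 3 * b)
    (n : ℕ) (hn : 1 ≤ n)
    (h : ℤ → ℤ) (hh : ∀ j : ℤ, h j = if 0 ≤ j then a * j ^ n + b else 0) :
    IsGreatest (qdepthSet h) (a / b + 1) := by
  have hh0 : ∀ j : ℤ, j < 0 → h j = 0 := fun j hj => by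
    rw [hh]; simp [not_le.mpr hj]
  have h0 : h 0 = b := by rw [hh]; simp [zero_pow (by omega : n ≠ 0)]
  have h1 : h 1 = a + b := by rw [hh]; simp
  have h2 : h 2 = a * 2 ^ n + b := by rw [hh]; norm_num
  have h3 : h 3 = a * 3 ^ n + b := by rw [hh]; norm_num
  have hA : a % b + b * (a / b) = a := Int.emod_add_mul_ediv a b
  have hr0 : 0 ≤ a % b := Int.emod_nonneg a (by omega)
  have hrb : a % b < b := Int.emod_lt_of_pos a hb
  have hq0 : 0 ≤ a / b := Int.ediv_nonneg ha.le hb.le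
  have hq3 : a / b < 3 := by
    by_contra hc
    push_neg at hc
    nlinarith [hA, hrb, hr0]
  have hp2 : (2:ℤ) ≤ 2 ^ n := by
    calc (2:ℤ) = 2 ^ 1 := by norm_num
    _ ≤ 2 ^ n := pow_le_pow_right₀ (by norm_num) hn
  have hp23 : (2:ℤ) ^ n ≤ 3 ^ n := pow_le_pow_left₀ (by norm_num) (by norm_num) n
  constructor
  · -- membership
    intro k hk
    have hcase : a / b = 0 ∨ a / b = 1 ∨ a / b = 2 := by omega
    rw [beta_eq_sum h hh0]
    rcases lt_or_ge k 0 with hkneg | hkpos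
    · rw [Finset.Icc_eq_empty (by omega)]; simp
    · rcases hcase with hq | hq | hq <;> rw [hq] at hA hk ⊢
      · -- d = 1, a < b
        have hab1 : a < b := by omega
        have : k = 0 ∨ k = 1 := by omega
        rcases this with rfl | rfl
        · rw [show Finset.Icc (0:ℤ) 0 = {0} from by decide]
          simp [h0]; omega
        · rw [show Finset.Icc (0:ℤ) 1 = {0,1} from by decide]
          norm_num [h0, h1]
          omega
      · -- d = 2, b ≤ a < 2b
        have hab1 : b ≤ a ∧ a < 2 * b := by omega
        have : k = 0 ∨ k = 1 ∨ k = 2 := by omega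
        rcases this with rfl | rfl | rfl
        · rw [show Finset.Icc (0:ℤ) 0 = {0} from by decide]
          simp [h0]; omega
        · rw [show Finset.Icc (0:ℤ) 1 = {0,1} from by decide]
          norm_num [h0, h1]
          omega
        · rw [show Finset.Icc (0:ℤ) 2 = {0,1,2} from by decide]
          norm_num [h0, h1, h2, Int.toNat_natCast, Nat.choose, show Int.toNat 2 = 2 from rfl, show Int.toNat 3 = 3 from rfl]
          nlinarith [hp2]
      · -- d = 3, 2b ≤ a < 3b
        have hab1 : 2 * b ≤ a ∧ a < 3 * b := by omega
        have : k = 0 ∨ k = 1 ∨ k = 2 ∨ k = 3 := by omega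
        rcases this with rfl | rfl | rfl | rfl
        · rw [show Finset.Icc (0:ℤ) 0 = {0} from by decide]
          simp [h0]; omega
        · rw [show Finset.Icc (0:ℤ) 1 = {0,1} from by decide]
          norm_num [h0, h1]
          omega
        · rw [show Finset.Icc (0:ℤ) 2 = {0,1,2} from by decide]
          norm_num [h0, h1, h2, Int.toNat_natCast, Nat.choose, show Int.toNat 2 = 2 from rfl, show Int.toNat 3 = 3 from rfl]
          nlinarith [hp2]
        · rw [show Finset.Icc (0:ℤ) 3 = {0,1,2,3} from by decide]
          norm_num [h0, h1, h2, h3, Int.toNat_natCast, Nat.choose, show Int.toNat 2 = 2 from rfl, show Int.toNat 3 = 3 from rfl]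
          nlinarith [hp23]
  · -- upper bound
    intro d hd
    by_contra hc
    push_neg at hc
    have hd1 : 0 ≤ beta h d 1 := hd 1 (by omega)
    rw [beta_eq_sum h hh0, show Finset.Icc (0:ℤ) 1 = {0,1} from by decide] at hd1
    have hdt : ((d:ℤ).toNat : ℤ) = d := Int.toNat_of_nonneg (by omega)
    norm_num [h0, h1] at hd1
    rw [show d ⊔ 0 = d from max_eq_left (by omega)] at hd1
    have hdb : (a / b + 2) * b ≤ d * b := mul_le_mul_of_nonneg_right (by omega) hb.le
    nlinarith [hA, hrb, hd1, hdb]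
end

section
/- Let a, b, n be positive integers with a ≥ 3b, and h(j) = a·j^n + b for j ≥ 0, h(j) = 0 for j < 0. Then qdepth(h) ≥ 3. -/
section SupportedOnNonneg

variable {h : ℤ → ℤ}

lemma beta_of_neg (hneg : ∀ j < 0, h j = 0) (d : ℤ) {k : ℤ} (hk : k < 0) : beta h d k = 0 :=
  finsum_mem_of_eqOn_zero fun j hj => by simp [hneg j (lt_of_le_of_lt hj hk)]

lemma beta_eq_sum_Icc (hneg : ∀ j < 0, h j = 0) (d : ℤ) {k : ℤ} :
    beta h d k = ∑ j ∈ Finset.Icc 0 k,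
      (-1 : ℤ) ^ (k - j).toNat * ((d - j).toNat.choose (k - j).toNat : ℤ) * h j := by
  refine finsum_mem_eq_sum_of_inter_support_eq _ (Set.ext fun j => ?_)
  simp only [Set.mem_inter_iff, Set.mem_Iic, Function.mem_support, Finset.coe_Icc, Set.mem_Icc]
  refine ⟨fun ⟨hjk, hne⟩ => ⟨⟨?_, hjk⟩, hne⟩, fun ⟨⟨_, hjk⟩, hne⟩ => ⟨hjk, hne⟩⟩
  by_contra! hj
  exact hne (by simp [hneg j hj])

lemma mem_qdepthSet_iff (hneg : ∀ j < 0, h j = 0) {d : ℤ} :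
    d ∈ qdepthSet h ↔ ∀ k, 0 ≤ k → k ≤ d → 0 ≤ beta h d k := by
  refine ⟨fun hd k _ hkd => hd k hkd, fun hd k hkd => ?_⟩
  rcases lt_or_ge k 0 with hk | hk
  · exact (beta_of_neg hneg d hk).ge
  · exact hd k hk hkd

lemma beta_three_zero (hneg : ∀ j < 0, h j = 0) : beta h 3 0 = h 0 := by
  simp [beta_eq_sum_Icc hneg]

lemma beta_three_one (hneg : ∀ j < 0, h j = 0) : beta h 3 1 = h 1 - 3 * h 0 := by
  simp [beta_eq_sum_Icc hneg, show Finset.Icc (0 : ℤ) 1 = {0, 1} by decide]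
  ring

lemma beta_three_two (hneg : ∀ j < 0, h j = 0) : beta h 3 2 = h 2 - 2 * h 1 + 3 * h 0 := by
  simp [beta_eq_sum_Icc hneg, show Finset.Icc (0 : ℤ) 2 = {0, 1, 2} by decide]
  ring

lemma beta_three_three (hneg : ∀ j < 0, h j = 0) : beta h 3 3 = h 3 - h 2 + h 1 - h 0 := by
  simp [beta_eq_sum_Icc hneg, show Finset.Icc (0 : ℤ) 3 = {0, 1, 2, 3} by decide]
  ring

lemma three_mem_qdepthSet (hneg : ∀ j < 0, h j = 0) (hβ₀ : 0 ≤ h 0) (hβ₁ : 3 * h 0 ≤ h 1)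
    (hβ₂ : 2 * h 1 ≤ h 2 + 3 * h 0) (hβ₃ : h 0 + h 2 ≤ h 1 + h 3) : 3 ∈ qdepthSet h := by
  refine (mem_qdepthSet_iff hneg).2 fun k hk0 hk3 => ?_
  interval_cases k
  · rw [beta_three_zero hneg]; exact hβ₀
  · rw [beta_three_one hneg]; linarith
  · rw [beta_three_two hneg]; linarith
  · rw [beta_three_three hneg]; linarith

end SupportedOnNonneg

theorem qdepth_ge_three_general (a b : ℤ) (hb : 0 < b) (hab : 3 * b ≤ a)
    (n : ℕ) (hn : 1 ≤ n)
    (h : ℤ → ℤ) (hh : ∀ j : ℤ, h j = if 0 ≤ j then a * j ^ n + b else 0)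
    (d : ℤ) (hd : IsGreatest (qdepthSet h) d) :
    3 ≤ d := by
  have hneg : ∀ j < 0, h j = 0 := fun j hj => by simp [hh, hj.not_ge]
  have ha : 0 ≤ a := by linarith
  have two_a_le : 2 * a ≤ a * 2 ^ n := by
    nlinarith [le_self_pow₀ (by norm_num : (1 : ℤ) ≤ 2) (by omega : n ≠ 0)]
  have a_two_pow_le : a * 2 ^ n ≤ a * 3 ^ n :=
    mul_le_mul_of_nonneg_left (pow_le_pow_left₀ (by norm_num) (by norm_num) n) ha
  refine hd.2 (three_mem_qdepthSet hneg ?_ ?_ ?_ ?_) <;>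
    simp only [hh, zero_pow (by omega : n ≠ 0)] <;> norm_num <;> linarith

theorem qdepth_ge_three (a b : ℤ) (ha : 0 < a) (hb : 0 < b) (hab : 3 * b ≤ a)
    (n : ℕ) (hn : 1 ≤ n)
    (h : ℤ → ℤ) (hh : ∀ j : ℤ, h j = if 0 ≤ j then a * j ^ n + b else 0)
    (d : ℤ) (hd : IsGreatest (qdepthSet h) d) :
    3 ≤ d :=
  qdepth_ge_three_general a b hb hab n hn h hh d hd
end
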